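/- arXiv:1410.6046 — 5 statements merged into one kernel-verified Lean document; each statement's English description precedes it below -/
import Mathlib

section
/- Let a be an infinite (0,1)-vector and A the matrix with constant columns whose i-th column entries all equal a_i. If σ occurs in τ as an a-vincular pattern (σ ∈_a τ), then σ ≤_a τ in the a-vincular pattern poset. -/
open scoped Classical

/-- A finite permutation of arbitrary length: a length `n` together with a
permutation of `Fin n` (in one-line notation, the entry at position `i` is
its value at `i`). -/
abbrev QPerm : Type := Σ n : ℕ, Equiv.Perm (Fin n)

/-- `IsOcc a σ τ f` : the strictly monotone position map `f` selects an
occurrence of the pattern `σ` in `τ` (order-isomorphically), where for every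
gap index `j ≥ 1` (1-indexed) with `a j = false` the `j`-th and `(j+1)`-th
selected positions must be adjacent in `τ`. -/
def IsOcc (a : ℕ → Bool) {k n : ℕ} (σ : Equiv.Perm (Fin k)) (τ : Equiv.Perm (Fin n))
    (f : Fin k → Fin n) : Prop :=
  StrictMono f ∧ (∀ i j : Fin k, σ i < σ j ↔ τ (f i) < τ (f j)) ∧
    ∀ (i : ℕ) (h : i + 1 < k), a (i + 1) = false →
      (f ⟨i + 1, h⟩ : ℕ) = (f ⟨i, Nat.lt_of_succ_lt h⟩ : ℕ) + 1

/-- `σ` occurs in `τ` as an `a`-vincular pattern. -/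
def VOcc (a : ℕ → Bool) (σ τ : QPerm) : Prop :=
  ∃ f : Fin σ.1 → Fin τ.1, IsOcc a σ.2 τ.2 f

/-- Covering relation of the `a`-vincular pattern poset. -/
def VCov (a : ℕ → Bool) (σ τ : QPerm) : Prop :=
  σ.1 + 1 = τ.1 ∧ VOcc a σ τ

/-- The `a`-vincular pattern order: reflexive-transitive closure of covering. -/
def VLe (a : ℕ → Bool) (σ τ : QPerm) : Prop :=
  Relation.ReflTransGen (VCov a) σ τ

/-- Occurrence as an `A`-vincular pattern for a matrix `A` (rows and columns
1-indexed via `A i j`); a pattern of length `k` uses row `k - 1`. -/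
def MOcc (A : ℕ → ℕ → Bool) (σ τ : QPerm) : Prop :=
  VOcc (fun j => A (σ.1 - 1) j) σ τ

/-- Covering relation of the `A`-vincular pattern poset. -/
def MCov (A : ℕ → ℕ → Bool) (σ τ : QPerm) : Prop :=
  σ.1 + 1 = τ.1 ∧ MOcc A σ τ

/-- The `A`-vincular pattern order. -/
def MLe (A : ℕ → ℕ → Bool) (σ τ : QPerm) : Prop :=
  Relation.ReflTransGen (MCov A) σ τ

/-- The quasi-consecutive adjacency vector `a = (1,0,0,…)` (1-indexed). -/
def qa : ℕ → Bool := fun j => decide (j = 1)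

/-- Quasi-consecutive pattern occurrence. -/
def QOcc (σ τ : QPerm) : Prop := VOcc qa σ τ

/-- Covering in the quasi-consecutive pattern poset. -/
def QCov (σ τ : QPerm) : Prop := VCov qa σ τ

/-- The quasi-consecutive pattern poset order. -/
def QLe (σ τ : QPerm) : Prop := VLe qa σ τ

/-- All permutations of length at most `n`, as a finset. -/
def permsUpTo (n : ℕ) : Finset QPerm :=
  (Finset.range (n + 1)).sigma fun _ => Finset.univ

/-- Möbius function of the quasi-consecutive pattern poset, computed with
fuel (the fuel `τ.1` always suffices, since lengths strictly increase along
the order). -/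
noncomputable def qMuAux : ℕ → QPerm → QPerm → ℤ
  | 0, σ, τ => if σ = τ then 1 else 0
  | m + 1, σ, τ =>
      if σ = τ then 1
      else -∑ z ∈ (permsUpTo τ.1).filter fun z => QLe σ z ∧ QLe z τ ∧ z ≠ τ,
            qMuAux m σ z

/-- The Möbius function of the quasi-consecutive pattern poset. -/
noncomputable def qMu (σ τ : QPerm) : ℤ := qMuAux τ.1 σ τ

/-- The interval `[σ, τ]` in the quasi-consecutive pattern poset. -/
def QInterval (σ τ : QPerm) : Set QPerm := {ρ | QLe σ ρ ∧ QLe ρ τ}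

/-- The interval `[σ, τ]` is a chain. -/
def QChain (σ τ : QPerm) : Prop :=
  ∀ ρ₁ ρ₂ : QPerm, ρ₁ ∈ QInterval σ τ → ρ₂ ∈ QInterval σ τ → QLe ρ₁ ρ₂ ∨ QLe ρ₂ ρ₁

/-- The interval `[σ, τ]` is order-isomorphic to the product of a chain with
`p + 1` elements and a chain with `q + 1` elements (componentwise order). -/
def IsGridInterval (σ τ : QPerm) (p q : ℕ) : Prop :=
  ∃ e : QInterval σ τ ≃ Fin (p + 1) × Fin (q + 1),
    ∀ ρ₁ ρ₂ : QInterval σ τ, QLe ρ₁.1 ρ₂.1 ↔ e ρ₁ ≤ e ρ₂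

/-- The occurrence `f` involves position `i` (0-indexed) of the big permutation. -/
def Involves {k n : ℕ} (f : Fin k → Fin n) (i : ℕ) : Prop :=
  ∃ j : Fin k, (f j : ℕ) = i

/-- The occurrence `f` is consecutive: all selected positions are adjacent. -/
def ConsecOcc {k n : ℕ} (f : Fin k → Fin n) : Prop :=
  ∀ (i : ℕ) (h : i + 1 < k),
    (f ⟨i + 1, h⟩ : ℕ) = (f ⟨i, Nat.lt_of_succ_lt h⟩ : ℕ) + 1

/-- The first two entries of `τ` are not consecutive integers. -/
def NotConsecFirstTwo (τ : QPerm) : Prop :=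
  ∀ i j : Fin τ.1, (i : ℕ) = 0 → (j : ℕ) = 1 →
    (τ.2 i : ℕ) + 1 ≠ (τ.2 j : ℕ) ∧ (τ.2 j : ℕ) + 1 ≠ (τ.2 i : ℕ)

/-- `τ` is a monotone (increasing or decreasing) permutation. -/
def IsMonotonePerm (τ : QPerm) : Prop :=
  (∀ i j : Fin τ.1, i < j → τ.2 i < τ.2 j) ∨ (∀ i j : Fin τ.1, i < j → τ.2 j < τ.2 i)

/-!
Induct on the length of `τ`. If `τ` is no longer than `σ`, the occurrence is the identity map and
`σ = τ`. Otherwise some position `p` of `τ` is unused by the occurrence `f`, and it can be chosen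
so that deleting it only closes a gap that `a` allows: the last position if it is unused, and
otherwise the least `p` with `f p ≠ p`. In the latter case `f` skips position `p` between its
entries `p - 1` and `p`, so the gap of index `p` is not required to be adjacent, i.e. `a p = 1`.
The pattern `ρ` of `τ` with `p` deleted is then covered by `τ`, and `σ` occurs in `ρ`.
-/

open Equiv

theorem exists_perm_lt_iff_lt {α : Type*} [LinearOrder α] {m : ℕ} {h : Fin m → α}
    (hh : Function.Injective h) : ∃ π : Perm (Fin m), ∀ i j, π i < π j ↔ h i < h j := by
  have hsort : StrictMono (h ∘ Tuple.sort h) :=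
    (Tuple.monotone_sort h).strictMono_of_injective (hh.comp (Equiv.injective _))
  refine ⟨(Tuple.sort h).symm, fun i j => ?_⟩
  conv_rhs => rw [← (Tuple.sort h).apply_symm_apply i, ← (Tuple.sort h).apply_symm_apply j]
  exact hsort.lt_iff_lt.symm

theorem Equiv.Perm.eq_of_lt_iff_lt {k : ℕ} {σ τ : Perm (Fin k)}
    (h : ∀ i j, σ i < σ j ↔ τ i < τ j) : σ = τ := by
  have hmono : StrictMono (τ ∘ σ.symm) := fun x y hxy =>
    (h _ _).mp (by simpa using hxy)
  ext i
  simpa using congrArg Fin.val (hmono.apply_eq (x := σ i)).symm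

theorem StrictMono.val_eq_add_one_of_apply {m n : ℕ} {g : Fin m → Fin n} (hg : StrictMono g)
    {x y : Fin m} (hxy : x < y) (h : (g y : ℕ) = g x + 1) : (y : ℕ) = x + 1 := by
  by_contra hne
  have hz : (x : ℕ) + 1 < m := by omega
  have h1 : g x < g ⟨x + 1, hz⟩ := hg (Fin.mk_lt_mk.mpr (by omega))
  have h2 : g ⟨x + 1, hz⟩ < g y := hg (Fin.mk_lt_mk.mpr (by omega))
  rw [Fin.lt_def] at h1 h2
  omega

theorem Fin.val_succAbove_add_one {m : ℕ} (p : Fin (m + 1)) {i : ℕ} (hi : i + 1 < m)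
    (hp : (p : ℕ) ≠ i + 1) :
    (p.succAbove ⟨i + 1, hi⟩ : ℕ) = p.succAbove ⟨i, by omega⟩ + 1 := by
  simp only [Fin.succAbove, Fin.lt_def, Fin.val_castSucc]
  split_ifs <;> simp_all <;> omega

section

variable {a : ℕ → Bool}

theorem IsOcc.of_comp {k m n : ℕ} {σ : Perm (Fin k)} {ρ : Perm (Fin m)} {τ : Perm (Fin n)}
    {f : Fin k → Fin m} {g : Fin m → Fin n} (hg : StrictMono g)
    (hρ : ∀ i j, ρ i < ρ j ↔ τ (g i) < τ (g j)) (hgf : IsOcc a σ τ (g ∘ f)) :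
    IsOcc a σ ρ f := by
  obtain ⟨hmono, hord, hadj⟩ := hgf
  refine ⟨fun i j hij => hg.lt_iff_lt.mp (hmono hij), fun i j => by rw [hord, hρ]; rfl,
    fun i hi hai => ?_⟩
  exact hg.val_eq_add_one_of_apply (hg.lt_iff_lt.mp (hmono (Fin.mk_lt_mk.mpr (by omega))))
    (hadj i hi hai)

theorem IsOcc.perm_eq {k : ℕ} {σ τ : Perm (Fin k)} {f : Fin k → Fin k}
    (hf : IsOcc a σ τ f) : σ = τ :=
  Equiv.Perm.eq_of_lt_iff_lt fun i j => by
    rw [hf.2.1, hf.1.apply_eq (x := i), hf.1.apply_eq (x := j)]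

/-- Deleting position `p` from a permutation of `Fin (m + 1)` merges the two gaps around `p`
into one, which `a` must allow unless `p` is the first or last position. -/
def IsRemovable (a : ℕ → Bool) {m : ℕ} (p : Fin (m + 1)) : Prop :=
  (p : ℕ) = 0 ∨ p = Fin.last m ∨ a p = true

theorem isOcc_succAbove {m : ℕ} {ρ : Perm (Fin m)} {τ : Perm (Fin (m + 1))} {p : Fin (m + 1)}
    (hp : IsRemovable a p)
    (hρ : ∀ i j, ρ i < ρ j ↔ τ (p.succAbove i) < τ (p.succAbove j)) :
    IsOcc a ρ τ p.succAbove := by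
  refine ⟨Fin.strictMono_succAbove p, hρ, fun i hi hai => p.val_succAbove_add_one hi ?_⟩
  rintro hpi
  rcases hp with hp | hp | hp
  · omega
  · rw [hp, Fin.val_last] at hpi
    omega
  · rw [hpi, hai] at hp
    exact Bool.false_ne_true hp

theorem IsOcc.val_apply_eq_of_forall_not_isRemovable {k m : ℕ} {σ : Perm (Fin k)}
    {τ : Perm (Fin (m + 1))} {f : Fin k → Fin (m + 1)} (hf : IsOcc a σ τ f)
    (h : ∀ p, p ∉ Set.range f → ¬ IsRemovable a p) (i : ℕ) (hi : i < k) :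
    (f ⟨i, hi⟩ : ℕ) = i := by
  obtain ⟨hmono, -, hadj⟩ := hf
  induction i with
  | zero =>
    by_contra hne
    refine h ⟨0, by omega⟩ ?_ (Or.inl rfl)
    rintro ⟨j, hj⟩
    have : f ⟨0, hi⟩ ≤ f j := hmono.monotone (Fin.mk_le_mk.mpr (Nat.zero_le _))
    simp only [hj, Fin.le_def] at this
    omega
  | succ i ih =>
    have hprev := ih (by omega)
    have hlt : f ⟨i, by omega⟩ < f ⟨i + 1, hi⟩ := hmono (Fin.mk_lt_mk.mpr (by omega))
    rw [Fin.lt_def, hprev] at hlt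
    by_contra hne
    have hunused : (⟨i + 1, by omega⟩ : Fin (m + 1)) ∉ Set.range f := by
      rintro ⟨j, hj⟩
      rcases Nat.lt_or_ge (j : ℕ) (i + 1) with hj' | hj'
      · have : f j ≤ f ⟨i, by omega⟩ := hmono.monotone (Fin.mk_le_mk.mpr (by omega))
        simp only [hj, Fin.le_def] at this
        omega
      · have : f ⟨i + 1, hi⟩ ≤ f j := hmono.monotone (Fin.mk_le_mk.mpr hj')
        simp only [hj, Fin.le_def] at this
        omega
    have hai : a (i + 1) = false :=
      Bool.eq_false_iff.mpr fun hai => h _ hunused (Or.inr (Or.inr hai))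
    exact hne (by rw [hadj i hi hai, hprev])

theorem IsOcc.exists_isRemovable_notMem_range {k m : ℕ} {σ : Perm (Fin k)}
    {τ : Perm (Fin (m + 1))} {f : Fin k → Fin (m + 1)} (hf : IsOcc a σ τ f) (hk : k ≤ m) :
    ∃ p, p ∉ Set.range f ∧ IsRemovable a p := by
  by_contra! h
  refine h (Fin.last m) ?_ (Or.inr (Or.inl rfl))
  rintro ⟨j, hj⟩
  have := hf.val_apply_eq_of_forall_not_isRemovable h j j.isLt
  rw [hj, Fin.val_last] at this
  omega

theorem IsOcc.exists_isOcc_isOcc_of_le {k m : ℕ} {σ : Perm (Fin k)} {τ : Perm (Fin (m + 1))}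
    {f : Fin k → Fin (m + 1)} (hf : IsOcc a σ τ f) (hk : k ≤ m) :
    ∃ (ρ : Perm (Fin m)) (f' : Fin k → Fin m) (g : Fin m → Fin (m + 1)),
      IsOcc a σ ρ f' ∧ IsOcc a ρ τ g := by
  obtain ⟨p, hp, hrem⟩ := hf.exists_isRemovable_notMem_range hk
  obtain ⟨ρ, hρ⟩ :=
    exists_perm_lt_iff_lt (τ.injective.comp (Fin.succAbove_right_injective (p := p)))
  have hg := isOcc_succAbove hrem hρ
  choose f' hf' using fun j => Fin.exists_succAbove_eq fun h : f j = p => hp ⟨j, h⟩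
  rw [← funext hf'] at hf
  exact ⟨ρ, f', p.succAbove, hf.of_comp hg.1 hg.2.1, hg⟩

theorem vle_of_isOcc {k n : ℕ} {σ : Perm (Fin k)} {τ : Perm (Fin n)} {f : Fin k → Fin n}
    (hf : IsOcc a σ τ f) : VLe a ⟨k, σ⟩ ⟨n, τ⟩ := by
  induction n, Fin.le_of_injective f hf.1.injective using Nat.le_induction with
  | base =>
    rw [hf.perm_eq]
    exact .refl
  | succ m hk ih =>
    obtain ⟨ρ, f', g, hσρ, hρτ⟩ := hf.exists_isOcc_isOcc_of_le hk
    exact (ih hσρ).tail ⟨rfl, g, hρτ⟩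

end

/-- For a constant-column matrix encoded by the vector `a`: if `σ` occurs in
`τ` as an `a`-vincular pattern, then `σ ≤ₐ τ`. -/
theorem vocc_implies_vle (a : ℕ → Bool) (σ τ : QPerm) (h : VOcc a σ τ) :
    VLe a σ τ := by
  obtain ⟨f, hf⟩ := h
  exact vle_of_isOcc hf
end

section
/- Let a be the (0,1)-vector whose first k components equal 1 and all remaining components equal 0. Then for all permutations σ, τ: σ occurs in τ as an a-vincular pattern if and only if σ ≤_a τ in the a-vincular pattern poset. -/
open scoped Classical

/-!
Call gap `j` of an occurrence (between its `j`-th and `(j+1)`-th entries) tight when `a j = false`.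

Occurrence implies the order for every `a`. Deleting the entry at position `p` of `τ` fuses the
two gaps around it into gap `p` of the shorter permutation, so the deletion yields a covering step
when `p` is an end position or gap `p` is not tight. If `σ` is shorter than `τ`, its occurrence
avoids such a position: an occurrence hitting all of them is forced to be an initial segment,
which misses the last position. Removing that entry keeps the occurrence of `σ`, and we induct on
the length of `τ`.

Conversely, the order implies occurrence as soon as occurrences compose, which holds when the
tight gaps form a final segment: a strictly monotone position map sends gap `i` to a gap at
position at least `i`, which is then tight as well.
-/
open Equiv Function

lemma Fin.val_le_val_of_strictMono {m n : ℕ} {f : Fin m → Fin n} (hf : StrictMono f)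
    (i : Fin m) : (i : ℕ) ≤ f i := by
  obtain ⟨i, hi⟩ := i
  induction i with
  | zero => exact Nat.zero_le _
  | succ i ih =>
    have hlt : f ⟨i, by omega⟩ < f ⟨i + 1, hi⟩ := hf (Fin.mk_lt_mk.mpr i.lt_succ_self)
    exact Nat.succ_le_of_lt ((ih (by omega)).trans_lt hlt)

lemma StrictMono.val_eq_add_one_of_val_apply_eq {m n : ℕ} {f : Fin m → Fin n}
    (hf : StrictMono f) {x y : Fin m} (hxy : (f y : ℕ) = f x + 1) : (y : ℕ) = x + 1 := by
  have hcov : f x ⋖ f y := by simp [Fin.covBy_iff, hxy]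
  have h := hcov.of_image (OrderEmbedding.ofStrictMono f hf)
  simp only [Fin.covBy_iff, Nat.covBy_iff_add_one_eq] at h
  exact h.symm

lemma Fin.val_succAbove {n : ℕ} (p : Fin (n + 1)) (i : Fin n) :
    (p.succAbove i : ℕ) = if (i : ℕ) < p then (i : ℕ) else i + 1 := by
  unfold Fin.succAbove
  split_ifs <;> simp_all [Fin.lt_def]

namespace Equiv.Perm

def removeNth {n : ℕ} (τ : Perm (Fin (n + 1))) (p : Fin (n + 1)) : Perm (Fin n) :=
  removeNone ((finSuccEquiv' p).symm.trans (τ.trans (finSuccEquiv' (τ p))))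

lemma succAbove_removeNth {n : ℕ} (τ : Perm (Fin (n + 1))) (p : Fin (n + 1)) (i : Fin n) :
    (τ p).succAbove (τ.removeNth p i) = τ (p.succAbove i) := by
  have hne : τ (p.succAbove i) ≠ τ p := τ.injective.ne (p.succAbove_ne i)
  obtain ⟨j, hj⟩ := Fin.exists_succAbove_eq hne
  have hsome := removeNone_some (x := i)
    ((finSuccEquiv' p).symm.trans (τ.trans (finSuccEquiv' (τ p)))) ⟨j, by simp [← hj]⟩
  simp only [trans_apply, finSuccEquiv'_symm_some, ← hj, finSuccEquiv'_succAbove] at hsome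
  rw [removeNth, Option.some_injective _ hsome, hj]

end Equiv.Perm

section Occurrence

variable {a : ℕ → Bool} {m n N : ℕ}
  {σ : Perm (Fin m)} {ρ : Perm (Fin n)} {τ : Perm (Fin N)}

lemma IsOcc.val_apply_eq_add_one {f : Fin m → Fin N} (hf : IsOcc a σ τ f) {x y : Fin m}
    (hxy : (y : ℕ) = x + 1) (hay : a y = false) : (f y : ℕ) = f x + 1 := by
  obtain ⟨i, hi⟩ := x
  obtain ⟨j, hj⟩ := y
  obtain rfl : j = i + 1 := hxy
  exact hf.2.2 i hj hay

lemma IsOcc.eq {σ τ : Perm (Fin m)} {f : Fin m → Fin m} (hf : IsOcc a σ τ f) : σ = τ := by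
  obtain rfl : f = id := hf.1.eq_id
  have hmono : StrictMono (τ ∘ σ.symm) := fun x y hxy => (hf.2.1 _ _).1 (by simpa using hxy)
  refine Equiv.ext fun i => ?_
  simpa using (congrFun hmono.eq_id (σ i)).symm

lemma IsOcc.comp (ha : Antitone fun j => a (j + 1)) {g : Fin m → Fin n} {f : Fin n → Fin N}
    (hg : IsOcc a σ ρ g) (hf : IsOcc a ρ τ f) : IsOcc a σ τ (f ∘ g) := by
  refine ⟨hf.1.comp hg.1, fun i j => (hg.2.1 i j).trans (hf.2.1 _ _), fun i hi hai => ?_⟩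
  have hgi := hg.val_apply_eq_add_one (x := ⟨i, by omega⟩) (y := ⟨i + 1, hi⟩) rfl hai
  have hagi : a (g ⟨i + 1, hi⟩) = false := by
    rw [hgi]
    exact Bool.eq_false_of_le_false
      (by simpa [hai] using ha (Fin.val_le_val_of_strictMono hg.1 ⟨i, by omega⟩))
  exact hf.val_apply_eq_add_one hgi hagi

lemma IsOcc.of_comp_s2 {a' : ℕ → Bool} {e : Fin n → Fin N} {g : Fin m → Fin n}
    (he : IsOcc a' ρ τ e) (h : IsOcc a σ τ (e ∘ g)) : IsOcc a σ ρ g := by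
  refine ⟨fun x y hxy => he.1.lt_iff_lt.mp (h.1 hxy), fun i j => (h.2.1 i j).trans
    (he.2.1 _ _).symm, fun i hi hai => ?_⟩
  exact he.1.val_eq_add_one_of_val_apply_eq (h.2.2 i hi hai)

lemma isOcc_succAbove_s2 (τ : Perm (Fin (N + 1))) {p : Fin (N + 1)}
    (hp : (p : ℕ) = 0 ∨ p = Fin.last N ∨ a p = true) :
    IsOcc a (τ.removeNth p) τ p.succAbove := by
  refine ⟨Fin.strictMono_succAbove p, fun i j => ?_, fun i hi hai => ?_⟩
  · rw [← (Fin.strictMono_succAbove (τ p)).lt_iff_lt, Perm.succAbove_removeNth,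
      Perm.succAbove_removeNth]
  · have hpi : (p : ℕ) ≠ i + 1 := by
      rintro hpi
      rcases hp with hp | hp | hp
      · omega
      · rw [hp, Fin.val_last] at hpi; omega
      · simp [hpi, hai] at hp
    simp only [Fin.val_succAbove]
    split_ifs <;> omega

lemma IsOcc.val_apply_eq_self {f : Fin m → Fin N} (hf : IsOcc a σ τ f)
    (hhit : ∀ p : Fin N, ((p : ℕ) = 0 ∨ a p = true) → p ∈ Set.range f) (i : Fin m) :
    (f i : ℕ) = i := by
  induction i using WellFoundedLT.induction with
  | _ i ih =>
  by_cases hi : (i : ℕ) = 0 ∨ a i = true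
  · have hiN : (i : ℕ) < N := (Fin.val_le_val_of_strictMono hf.1 i).trans_lt (f i).isLt
    obtain ⟨j, hj⟩ := hhit ⟨i, hiN⟩ hi
    have hji : i ≤ j := by
      by_contra! hji
      have := ih j hji
      rw [hj] at this
      exact (Fin.lt_def.mp hji).ne this.symm
    have := hf.1.monotone hji
    rw [hj, Fin.le_def] at this
    exact le_antisymm this (Fin.val_le_val_of_strictMono hf.1 i)
  · simp only [not_or, Bool.not_eq_true] at hi
    obtain ⟨i', hi'⟩ : ∃ i', (i : ℕ) = i' + 1 := Nat.exists_eq_succ_of_ne_zero hi.1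
    have hi'm : i' < m := by have := i.isLt; omega
    have hprev : (⟨i', hi'm⟩ : Fin m) < i := by simp [Fin.lt_def, hi']
    rw [hf.val_apply_eq_add_one (x := ⟨i', hi'm⟩) hi' hi.2, ih _ hprev]
    exact hi'.symm

lemma IsOcc.exists_removable {f : Fin m → Fin (N + 1)} {τ : Perm (Fin (N + 1))}
    (hf : IsOcc a σ τ f) (hm : m < N + 1) :
    ∃ p : Fin (N + 1), ((p : ℕ) = 0 ∨ p = Fin.last N ∨ a p = true) ∧ p ∉ Set.range f := by
  by_contra! hhit
  obtain ⟨j, hj⟩ := hhit (Fin.last N) (Or.inr (Or.inl rfl))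
  have := hf.val_apply_eq_self (fun p hp => hhit p (hp.imp_right Or.inr)) j
  rw [hj, Fin.val_last] at this
  omega

end Occurrence

section Order

variable {a : ℕ → Bool}

lemma VOcc.refl (σ : QPerm) : VOcc a σ σ :=
  ⟨id, strictMono_id, fun _ _ => Iff.rfl, fun _ _ _ => rfl⟩

lemma VOcc.trans (ha : Antitone fun j => a (j + 1)) {σ ρ τ : QPerm} (h₁ : VOcc a σ ρ)
    (h₂ : VOcc a ρ τ) : VOcc a σ τ :=
  let ⟨g, hg⟩ := h₁
  let ⟨f, hf⟩ := h₂
  ⟨f ∘ g, hg.comp ha hf⟩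

lemma VLe.vOcc (ha : Antitone fun j => a (j + 1)) {σ τ : QPerm} (h : VLe a σ τ) :
    VOcc a σ τ := by
  induction h with
  | refl => exact VOcc.refl σ
  | tail _ hcov ih => exact ih.trans ha hcov.2

lemma VOcc.vLe {σ τ : QPerm} (h : VOcc a σ τ) : VLe a σ τ := by
  obtain ⟨m, σ⟩ := σ
  obtain ⟨N, τ⟩ := τ
  obtain ⟨f, hf⟩ := h
  dsimp only at f hf
  induction N with
  | zero =>
    obtain rfl : m = 0 := Nat.le_zero.mp (Fin.le_of_injective f hf.1.injective)
    rw [hf.eq]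
    exact .refl
  | succ N ih =>
    rcases (Fin.le_of_injective f hf.1.injective).eq_or_lt with rfl | hm
    · rw [hf.eq]
      exact .refl
    obtain ⟨p, hp, hpf⟩ := hf.exists_removable hm
    choose g hg using fun j => Fin.exists_succAbove_eq (x := f j) fun h => hpf ⟨j, h⟩
    have hocc := isOcc_succAbove_s2 (a := a) τ hp
    have hσ : IsOcc a σ (τ.removeNth p) g := hocc.of_comp_s2 (by rwa [comp_def, funext hg])
    exact (ih _ g hσ).tail ⟨rfl, _, hocc⟩

end Order

/-- If `a` has its first `k` components equal to `1` and all remaining ones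
equal to `0`, then occurrence as an `a`-vincular pattern coincides with the
`a`-vincular pattern order. -/
theorem vocc_iff_vle_of_initial_ones (k : ℕ) (σ τ : QPerm) :
    VOcc (fun j => decide (1 ≤ j ∧ j ≤ k)) σ τ ↔
      VLe (fun j => decide (1 ≤ j ∧ j ≤ k)) σ τ := by
  have ha : Antitone fun j => decide (1 ≤ j + 1 ∧ j + 1 ≤ k) := fun i j hij => by
    simp only [Bool.le_iff_imp, decide_eq_true_eq]
    omega
  exact ⟨VOcc.vLe, VLe.vOcc ha⟩
end

section
/- In the quasi-consecutive pattern poset, every permutation τ covers at most three permutations; moreover, any permutation covered by τ is obtained from τ by deleting either the first, the second, or the last entry of τ (and flattening). -/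
open scoped Classical

/-! A pattern covered by `τ` (length `n`) has an occurrence `f : Fin (n - 1) → Fin n`, which is
strictly monotone and hence equal to `q.succAbove` for the one position `q` it skips. If
`2 ≤ q < n - 1`, the entries at positions `q - 1` and `q` of the pattern land at `q - 1` and
`q + 1` in `τ`, violating the adjacency required at every gap but the first; so
`q ∈ {0, 1, n - 1}`. A pattern is recovered from the positions of any of its occurrences, so each
admissible `q` contributes at most one covered permutation. -/

theorem Equiv.Perm.eq_of_lt_iff_lt_s4 {α : Type*} [LinearOrder α] [WellFoundedLT α]
    {π₁ π₂ : Equiv.Perm α} (h : ∀ i j, π₁ i < π₁ j ↔ π₂ i < π₂ j) : π₁ = π₂ := by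
  let e : α ≃o α :=
    { π₁.symm.trans π₂ with
      map_rel_iff' := fun {a b} => by
        simpa [not_lt] using (h (π₁.symm b) (π₁.symm a)).not.symm }
  have he : e = OrderIso.refl α := Subsingleton.elim _ _
  ext x
  simpa [e] using (DFunLike.congr_fun he (π₁ x)).symm

theorem Fin.exists_eq_succAbove_of_strictMono {k : ℕ} {f : Fin k → Fin (k + 1)}
    (hf : StrictMono f) : ∃ q : Fin (k + 1), f = q.succAbove := by
  obtain ⟨q, -, hq⟩ := Finset.exists_mem_notMem_of_card_lt_card
    (s := Finset.univ.image f) (t := Finset.univ)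
    (by simp [Finset.card_image_of_injective _ hf.injective])
  have himage : Finset.univ.image f = {q}ᶜ :=
    Finset.eq_of_subset_of_card_le
      (fun x hx => Finset.mem_compl.mpr <| Finset.notMem_singleton.mpr <| by
        rintro rfl
        exact hq hx)
      (by simp [Finset.card_compl, Finset.card_image_of_injective _ hf.injective])
  refine ⟨q, (hf.range_inj (Fin.strictMono_succAbove q)).mp ?_⟩
  rw [Fin.range_succAbove, ← Finset.coe_singleton, ← Finset.coe_compl, ← himage]
  simp

section Occurrence

variable {a : ℕ → Bool} {k : ℕ}

theorem IsOcc.perm_eq_s4 {n : ℕ} {π₁ π₂ : Equiv.Perm (Fin k)} {ρ : Equiv.Perm (Fin n)}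
    {f : Fin k → Fin n} (h₁ : IsOcc a π₁ ρ f) (h₂ : IsOcc a π₂ ρ f) : π₁ = π₂ :=
  Equiv.Perm.eq_of_lt_iff_lt_s4 fun i j => (h₁.2.1 i j).trans (h₂.2.1 i j).symm

/-- Skipping an interior position `q` separates the entries on either side of the gap `q`. -/
theorem IsOcc.gap_eq_true_of_succAbove {π : Equiv.Perm (Fin k)}
    {ρ : Equiv.Perm (Fin (k + 1))} {q : Fin (k + 1)} (h : IsOcc a π ρ q.succAbove) (hq₀ : q ≠ 0)
    (hqk : q ≠ Fin.last k) :
    a q = true := by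
  have hq₀' : 0 < (q : ℕ) := Fin.pos_iff_ne_zero.mpr hq₀
  have hqk' : (q : ℕ) < k := Fin.val_lt_last hqk
  by_contra ha
  have hadj := h.2.2 ((q : ℕ) - 1) (by omega) (by simpa [Nat.sub_add_cancel hq₀'] using ha)
  rw [Fin.succAbove_of_le_castSucc q ⟨(q : ℕ) - 1 + 1, _⟩ (Fin.le_def.mpr (by simp; omega)),
    Fin.succAbove_of_castSucc_lt q ⟨(q : ℕ) - 1, _⟩
      (Fin.lt_def.mpr (by simpa using Nat.sub_lt hq₀' one_pos))] at hadj
  simp at hadj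

def patternsOmitting (a : ℕ → Bool) (ρ : Equiv.Perm (Fin (k + 1))) (q : Fin (k + 1)) :
    Set QPerm :=
  {σ | ∃ π, σ = ⟨k, π⟩ ∧ IsOcc a π ρ q.succAbove}

theorem subsingleton_patternsOmitting (ρ : Equiv.Perm (Fin (k + 1))) (q : Fin (k + 1)) :
    (patternsOmitting a ρ q).Subsingleton := by
  rintro _ ⟨π₁, rfl, h₁⟩ _ ⟨π₂, rfl, h₂⟩
  rw [h₁.perm_eq_s4 h₂]

theorem VCov.exists_mem_patternsOmitting {σ : QPerm} {ρ : Equiv.Perm (Fin (k + 1))}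
    (h : VCov a σ ⟨k + 1, ρ⟩) :
    ∃ q, (q = 0 ∨ q = Fin.last k ∨ a q = true) ∧ σ ∈ patternsOmitting a ρ q := by
  obtain ⟨k', π⟩ := σ
  obtain ⟨hk, f, hf⟩ := h
  obtain rfl : k' = k := Nat.succ_injective hk
  obtain ⟨q, rfl⟩ := Fin.exists_eq_succAbove_of_strictMono hf.1
  refine ⟨q, ?_, π, rfl, hf⟩
  by_cases hq₀ : q = 0
  · exact Or.inl hq₀
  by_cases hqk : q = Fin.last _
  · exact Or.inr (Or.inl hqk)
  exact Or.inr (Or.inr (hf.gap_eq_true_of_succAbove hq₀ hqk))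

end Occurrence

theorem QCov.exists_mem_patternsOmitting {σ : QPerm} {k : ℕ} {ρ : Equiv.Perm (Fin (k + 1))}
    (h : QCov σ ⟨k + 1, ρ⟩) :
    ∃ q, (q = 0 ∨ q = 1 ∨ q = Fin.last k) ∧ σ ∈ patternsOmitting qa ρ q := by
  obtain ⟨q, hq, hσ⟩ := VCov.exists_mem_patternsOmitting h
  refine ⟨q, ?_, hσ⟩
  rcases hq with hq | hq | hq
  · exact Or.inl hq
  · exact Or.inr (Or.inr hq)
  · have hq1 : (q : ℕ) = 1 := by simpa [qa] using hq
    exact Or.inr (Or.inl (Fin.ext (by rw [hq1, Fin.val_one', Nat.mod_eq_of_lt (by omega)])))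

theorem encard_setOf_qCov_le_three {k : ℕ} (ρ : Equiv.Perm (Fin (k + 1))) :
    {σ : QPerm | QCov σ ⟨k + 1, ρ⟩}.encard ≤ 3 := by
  let Q : Finset (Fin (k + 1)) := {0, 1, Fin.last k}
  have hsub : {σ : QPerm | QCov σ ⟨k + 1, ρ⟩} ⊆ ⋃ q ∈ Q, patternsOmitting qa ρ q := by
    intro σ hσ
    obtain ⟨q, hq, hσq⟩ := QCov.exists_mem_patternsOmitting hσ
    exact Set.mem_biUnion (by simpa [Q] using hq) hσq
  calc _ ≤ (⋃ q ∈ Q, patternsOmitting qa ρ q).encard := Set.encard_le_encard hsub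
    _ ≤ ∑ q ∈ Q, (patternsOmitting qa ρ q).encard := Q.set_encard_biUnion_le _
    _ ≤ Q.card • 1 := Finset.sum_le_card_nsmul _ _ _ fun q _ =>
      Set.encard_le_one_iff_subsingleton.mpr (subsingleton_patternsOmitting ρ q)
    _ ≤ 3 := by simpa using Finset.card_le_three

/-- Every `τ` covers at most three permutations in the quasi-consecutive
pattern poset, and any permutation covered by `τ` is obtained by deleting
the first, the second, or the last entry of `τ` (and flattening): it has an
occurrence in `τ` omitting only such a position. -/
theorem covers_at_most_three (τ : QPerm) :
    {σ : QPerm | QCov σ τ}.Finite ∧ {σ : QPerm | QCov σ τ}.ncard ≤ 3 ∧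
      ∀ σ : QPerm, QCov σ τ →
        ∃ f : Fin σ.1 → Fin τ.1, IsOcc qa σ.2 τ.2 f ∧
          ∀ q : Fin τ.1, q ∉ Set.range f →
            (q : ℕ) = 0 ∨ (q : ℕ) = 1 ∨ (q : ℕ) = τ.1 - 1 := by
  obtain ⟨_ | k, ρ⟩ := τ
  · have hempty : {σ : QPerm | QCov σ ⟨0, ρ⟩} = ∅ :=
      Set.eq_empty_of_forall_notMem fun σ h => Nat.succ_ne_zero _ h.1
    exact ⟨by simp [hempty], by simp [hempty], fun σ h => absurd h.1 (Nat.succ_ne_zero _)⟩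
  obtain ⟨hfin, hcard⟩ :=
    Set.encard_le_coe_iff_finite_ncard_le.mp (encard_setOf_qCov_le_three ρ)
  refine ⟨hfin, hcard, fun σ hσ => ?_⟩
  obtain ⟨q, hq, π, rfl, hocc⟩ := QCov.exists_mem_patternsOmitting hσ
  refine ⟨q.succAbove, hocc, fun q' hq' => ?_⟩
  obtain rfl : q' = q := by simpa using hq'
  rcases hq with rfl | rfl | rfl <;> rcases k with _ | k <;> simp
end

section
/- In the quasi-consecutive pattern poset, if a permutation τ covers precisely one permutation, then τ is monotone (either increasing or decreasing), and consequently for any σ ≤ τ the interval [σ, τ] is a chain. -/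
open scoped Classical

/-! If `τ` has length `m + 1`, deleting its last entry and deleting its first entry both give
permutations covered by `τ`. When these coincide, `τ i < τ j ↔ τ (i + 1) < τ (j + 1)`, so all
adjacent pairs of `τ` compare the same way and `τ` is monotone. Below a monotone permutation
only monotone permutations of the same direction occur, one in each length, and they form a
chain of covers. -/

open Function

/-- The permutation order-isomorphic to an injective word `v`. -/
def standardize {α : Type*} [LinearOrder α] {k : ℕ} (v : Fin k → α) : Equiv.Perm (Fin k) :=
  (Tuple.sort v)⁻¹

lemma standardize_lt_standardize_iff {α : Type*} [LinearOrder α] {k : ℕ} {v : Fin k → α}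
    (hv : Injective v) (i j : Fin k) :
    standardize v i < standardize v j ↔ v i < v j := by
  have hsort : StrictMono (v ∘ Tuple.sort v) :=
    (Tuple.monotone_sort v).strictMono_of_injective (hv.comp (Tuple.sort v).injective)
  rw [← hsort.lt_iff_lt]
  simp [standardize]

lemma isOcc_standardize {a : ℕ → Bool} {k n : ℕ} (τ : Equiv.Perm (Fin n))
    {f : Fin k → Fin n} (hf : StrictMono f) (hcons : ConsecOcc f) :
    IsOcc a (standardize (τ ∘ f)) τ f :=
  ⟨hf, standardize_lt_standardize_iff (τ.injective.comp hf.injective), fun i h _ => hcons i h⟩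

lemma IsOcc.strictMono {a : ℕ → Bool} {k n : ℕ} {σ : Equiv.Perm (Fin k)}
    {τ : Equiv.Perm (Fin n)} {f : Fin k → Fin n} (hf : IsOcc a σ τ f) (hτ : StrictMono τ) :
    StrictMono σ :=
  fun i j hij => (hf.2.1 i j).2 (hτ (hf.1 hij))

lemma IsOcc.strictAnti {a : ℕ → Bool} {k n : ℕ} {σ : Equiv.Perm (Fin k)}
    {τ : Equiv.Perm (Fin n)} {f : Fin k → Fin n} (hf : IsOcc a σ τ f) (hτ : StrictAnti τ) :
    StrictAnti σ :=
  fun i j hij => (hf.2.1 j i).2 (hτ (hf.1 hij))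

lemma VLe.strictMono {a : ℕ → Bool} {σ τ : QPerm} (h : VLe a σ τ) (hτ : StrictMono τ.2) :
    StrictMono σ.2 := by
  induction h with
  | refl => exact hτ
  | tail _ hcov ih =>
    obtain ⟨-, f, hf⟩ := hcov
    exact ih (hf.strictMono hτ)

lemma VLe.strictAnti {a : ℕ → Bool} {σ τ : QPerm} (h : VLe a σ τ) (hτ : StrictAnti τ.2) :
    StrictAnti σ.2 := by
  induction h with
  | refl => exact hτ
  | tail _ hcov ih =>
    obtain ⟨-, f, hf⟩ := hcov
    exact ih (hf.strictAnti hτ)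

lemma Fin.strictMono_or_strictAnti_of_lt_iff_succ_lt_succ {α : Type*} [LinearOrder α] {m : ℕ}
    {f : Fin (m + 1) → α} (hf : Injective f)
    (h : ∀ i j : Fin m, f i.castSucc < f j.castSucc ↔ f i.succ < f j.succ) :
    StrictMono f ∨ StrictAnti f := by
  cases m with
  | zero => exact Or.inl (Fin.strictMono_iff_lt_succ.2 finZeroElim)
  | succ m =>
    have ascent_iff : ∀ i : Fin (m + 1), f i.castSucc < f i.succ ↔ f 0 < f 1 := by
      intro i
      induction i using Fin.induction with
      | zero => rfl
      | succ i ih => rw [← ih, ← Fin.succ_castSucc]; exact (h i.castSucc i.succ).symm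
    rcases (hf.ne (zero_ne_one : (0 : Fin (m + 2)) ≠ 1)).lt_or_gt with h01 | h10
    · exact Or.inl (Fin.strictMono_iff_lt_succ.2 fun i => (ascent_iff i).2 h01)
    · refine Or.inr (Fin.strictAnti_iff_succ_lt.2 fun i => ?_)
      refine (hf.ne Fin.castSucc_lt_succ.ne).lt_or_gt.resolve_left fun hi => ?_
      exact h10.not_gt ((ascent_iff i).1 hi)

lemma lt_iff_succ_lt_succ_of_existsUnique_qCov {m : ℕ} {t : Equiv.Perm (Fin (m + 1))}
    (h : ∃! σ : QPerm, QCov σ ⟨m + 1, t⟩) (i j : Fin m) :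
    t i.castSucc < t j.castSucc ↔ t i.succ < t j.succ := by
  have hlast : QCov ⟨m, standardize (t ∘ Fin.castSucc)⟩ ⟨m + 1, t⟩ :=
    ⟨rfl, _, isOcc_standardize t Fin.strictMono_castSucc fun _ _ => rfl⟩
  have hfirst : QCov ⟨m, standardize (t ∘ Fin.succ)⟩ ⟨m + 1, t⟩ :=
    ⟨rfl, _, isOcc_standardize t Fin.strictMono_succ fun _ _ => rfl⟩
  have hlast_iff :=
    standardize_lt_standardize_iff (t.injective.comp (Fin.castSucc_injective m)) i j
  have hfirst_iff := standardize_lt_standardize_iff (t.injective.comp (Fin.succ_injective m)) i j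
  rw [sigma_mk_injective (h.unique hlast hfirst)] at hlast_iff
  exact hlast_iff.symm.trans hfirst_iff

section Family

variable {P : (k : ℕ) → Equiv.Perm (Fin k)}
  (hP : ∀ k, QCov ⟨k, P k⟩ ⟨k + 1, P (k + 1)⟩)
include hP

lemma qLe_of_le {m l : ℕ} (hml : m ≤ l) : QLe ⟨m, P m⟩ ⟨l, P l⟩ := by
  induction l, hml using Nat.le_induction with
  | base => exact .refl
  | succ l _ ih => exact ih.tail (hP l)

lemma qChain_of_forall_qLe_eq {τ : QPerm} (hτ : ∀ ρ, QLe ρ τ → ρ = ⟨ρ.1, P ρ.1⟩)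
    (σ : QPerm) : QChain σ τ := by
  intro ρ₁ ρ₂ h₁ h₂
  rw [hτ ρ₁ h₁.2, hτ ρ₂ h₂.2]
  exact (le_total ρ₁.1 ρ₂.1).imp (qLe_of_le hP) (qLe_of_le hP)

end Family

lemma vCov_one (a : ℕ → Bool) (k : ℕ) : VCov a ⟨k, 1⟩ ⟨k + 1, 1⟩ :=
  ⟨rfl, Fin.castSucc, Fin.strictMono_castSucc, fun _ _ => Fin.castSucc_lt_castSucc_iff.symm,
    fun _ _ _ => rfl⟩

lemma vCov_revPerm (a : ℕ → Bool) (k : ℕ) :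
    VCov a ⟨k, Fin.revPerm⟩ ⟨k + 1, Fin.revPerm⟩ :=
  ⟨rfl, Fin.castSucc, Fin.strictMono_castSucc,
    fun _ _ => by simp [Fin.rev_lt_rev, Fin.castSucc_lt_castSucc_iff], fun _ _ _ => rfl⟩

lemma Equiv.Perm.eq_one_of_strictMono {k : ℕ} {t : Equiv.Perm (Fin k)} (ht : StrictMono t) :
    t = 1 :=
  Equiv.ext fun _ => ht.apply_eq

lemma Equiv.Perm.eq_revPerm_of_strictAnti {k : ℕ} {t : Equiv.Perm (Fin k)} (ht : StrictAnti t) :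
    t = Fin.revPerm :=
  Equiv.ext fun i => by
    simpa using congrArg Fin.rev ((Fin.rev_strictAnti.comp ht).apply_eq (x := i))

lemma qChain_of_strictMono {τ : QPerm} (hτ : StrictMono τ.2) (σ : QPerm) : QChain σ τ :=
  qChain_of_forall_qLe_eq (vCov_one qa) (fun ⟨_, r⟩ hr => by
    rw [Equiv.Perm.eq_one_of_strictMono (t := r) (VLe.strictMono hr hτ)]) σ

lemma qChain_of_strictAnti {τ : QPerm} (hτ : StrictAnti τ.2) (σ : QPerm) : QChain σ τ :=
  qChain_of_forall_qLe_eq (vCov_revPerm qa) (fun ⟨_, r⟩ hr => by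
    rw [Equiv.Perm.eq_revPerm_of_strictAnti (t := r) (VLe.strictAnti hr hτ)]) σ

/-- If `τ` covers precisely one permutation in the quasi-consecutive pattern
poset, then `τ` is monotone, and every interval `[σ, τ]` is a chain. -/
theorem covers_one_implies_monotone_and_chain (τ : QPerm)
    (h : ∃! σ : QPerm, QCov σ τ) :
    IsMonotonePerm τ ∧ ∀ σ : QPerm, QLe σ τ → QChain σ τ := by
  obtain ⟨_ | m, t⟩ := τ
  · obtain ⟨σ, ⟨hlen, -⟩, -⟩ := h
    exact absurd hlen σ.1.succ_ne_zero
  have hmono : StrictMono t ∨ StrictAnti t :=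
    Fin.strictMono_or_strictAnti_of_lt_iff_succ_lt_succ t.injective
      (lt_iff_succ_lt_succ_of_existsUnique_qCov h)
  refine ⟨hmono, fun σ _ => ?_⟩
  rcases hmono with hinc | hdec
  · exact qChain_of_strictMono hinc σ
  · exact qChain_of_strictAnti hdec σ
end

section
/- In the quasi-consecutive pattern poset, let τ = a_1 a_2 ⋯ a_n. If τ covers precisely two permutations, then either a_1 and a_2 are consecutive integers (|a_1 − a_2| = 1), or τ = 1 n (n−1) ⋯ 3 2, or τ = n 1 2 ⋯ (n−1). -/
open scoped Classical

/-!
Deleting the first, the second or the last entry of `τ` always gives a permutation covered by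
`τ`, so two of these three deletions coincide, and each coincidence pins `τ` down. If deleting
`a₁` or `a₂` gives the same pattern, the value just above `min a₁ a₂` compares in the same way
with `a₁` and with `a₂`, which forces `|a₁ - a₂| = 1`. If deleting `a₁` or `aₙ` does, all
comparisons are invariant under shifting positions, so `τ` is monotone. If deleting `a₂` or `aₙ`
does, `a₁` compares in the same way with every later entry (so it is `1` or `n`) and
`a₂ ⋯ aₙ` is monotone.
-/

theorem Set.eq_or_eq_or_eq_of_ncard_eq_two {α : Type*} {s : Set α} (hs : s.ncard = 2)
    {a b c : α} (ha : a ∈ s) (hb : b ∈ s) (hc : c ∈ s) : a = b ∨ a = c ∨ b = c := by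
  obtain ⟨x, y, -, rfl⟩ := Set.ncard_eq_two.1 hs
  simp only [Set.mem_insert_iff, Set.mem_singleton_iff] at ha hb hc
  rcases ha with rfl | rfl <;> rcases hb with rfl | rfl <;> rcases hc with rfl | rfl <;> simp

theorem Fin.forall_iff_zero_of_castSucc_iff_succ {k : ℕ} {P : Fin (k + 1) → Prop}
    (h : ∀ i : Fin k, P i.castSucc ↔ P i.succ) (j : Fin (k + 1)) : P j ↔ P 0 := by
  induction j using Fin.induction with
  | zero => rfl
  | succ i ih => exact (h i).symm.trans ih

theorem Fin.strictMono_or_strictAnti_of_succ_lt_succ_iff {α : Type*} [LinearOrder α] {k : ℕ}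
    {f : Fin (k + 1) → α} (hf : Function.Injective f)
    (h : ∀ i j : Fin k, f i.succ < f j.succ ↔ f i.castSucc < f j.castSucc) :
    StrictMono f ∨ StrictAnti f := by
  cases k with
  | zero => exact Or.inl (Fin.strictMono_iff_lt_succ.2 fun i => i.elim0)
  | succ k =>
    have ascent_iff := Fin.forall_iff_zero_of_castSucc_iff_succ
      (P := fun i => f i.castSucc < f i.succ) fun i => by
        simpa only [Fin.succ_castSucc] using (h i.castSucc i.succ).symm
    rw [Fin.strictMono_iff_lt_succ, Fin.strictAnti_iff_succ_lt]
    by_cases h0 : f (0 : Fin (k + 1)).castSucc < f (0 : Fin (k + 1)).succ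
    · exact Or.inl fun i => (ascent_iff i).2 h0
    · refine Or.inr fun i => lt_of_le_of_ne (not_lt.1 (mt (ascent_iff i).1 h0)) ?_
      exact hf.ne (Fin.castSucc_lt_succ).ne'

theorem Equiv.Perm.apply_eq_rev_of_strictAnti {n : ℕ} {τ : Equiv.Perm (Fin n)}
    (hτ : StrictAnti τ) (i : Fin n) : τ i = i.rev := by
  simpa using (hτ.comp Fin.rev_strictAnti).apply_eq (x := i.rev)

namespace Equiv.Perm

variable {m : ℕ}

/-- `τ` with the entry at position `p` deleted and the remaining values flattened. -/
def removeAt (τ : Perm (Fin (m + 1))) (p : Fin (m + 1)) : Perm (Fin m) :=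
  removeNone ((finSuccEquiv' p).symm.trans (τ.trans (finSuccEquiv' (τ p))))

theorem succAbove_removeAt_apply (τ : Perm (Fin (m + 1))) (p : Fin (m + 1)) (i : Fin m) :
    (τ p).succAbove (τ.removeAt p i) = τ (p.succAbove i) := by
  obtain ⟨j, hj⟩ := Fin.exists_succAbove_eq (τ.injective.ne (Fin.succAbove_ne p i))
  have hsome : some (τ.removeAt p i) = some j := by
    rw [removeAt, removeNone_some] <;> simp [finSuccEquiv'_symm_some, ← hj]
  rw [Option.some_injective _ hsome, hj]

theorem removeAt_lt_removeAt_iff (τ : Perm (Fin (m + 1))) (p : Fin (m + 1)) (i j : Fin m) :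
    τ.removeAt p i < τ.removeAt p j ↔ τ (p.succAbove i) < τ (p.succAbove j) := by
  rw [← succAbove_removeAt_apply, ← succAbove_removeAt_apply, Fin.succAbove_lt_succAbove_iff]

theorem lt_iff_lt_of_removeAt_eq {τ : Perm (Fin (m + 1))} {p q : Fin (m + 1)}
    (h : τ.removeAt p = τ.removeAt q) (i j : Fin m) :
    τ (p.succAbove i) < τ (p.succAbove j) ↔ τ (q.succAbove i) < τ (q.succAbove j) := by
  rw [← removeAt_lt_removeAt_iff, ← removeAt_lt_removeAt_iff, h]

end Equiv.Perm

theorem qCov_removeAt {m : ℕ} (τ : Equiv.Perm (Fin (m + 1))) {p : Fin (m + 1)}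
    (hp : (p : ℕ) ≤ 1 ∨ p = Fin.last m) : QCov ⟨m, τ.removeAt p⟩ ⟨m + 1, τ⟩ := by
  refine ⟨rfl, p.succAbove, Fin.strictMono_succAbove p, τ.removeAt_lt_removeAt_iff p, ?_⟩
  intro i hi hgap
  have hi0 : i ≠ 0 := by simpa [qa] using hgap
  rcases hp with hp | rfl
  · rw [Fin.succAbove_of_le_castSucc, Fin.succAbove_of_le_castSucc] <;>
      simp only [Fin.le_iff_val_le_val, Fin.val_succ, Fin.val_castSucc] <;> omega
  · simp

namespace Equiv.Perm

variable {k : ℕ} {τ : Perm (Fin (k + 2))}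

theorem consecutive_of_removeAt_zero_eq_removeAt_one (h : τ.removeAt 0 = τ.removeAt 1) :
    (τ 0 : ℕ) + 1 = τ 1 ∨ (τ 1 : ℕ) + 1 = τ 0 := by
  by_contra! hc
  have hne : (τ 0 : ℕ) ≠ τ 1 := Fin.val_ne_of_ne (τ.injective.ne zero_ne_one)
  have h0 := (τ 0).isLt
  have h1 := (τ 1).isLt
  obtain ⟨r, hr⟩ := τ.surjective ⟨min (τ 0 : ℕ) (τ 1) + 1, by omega⟩
  have hr' := congrArg Fin.val hr
  rcases Fin.eq_zero_or_eq_succ r with rfl | ⟨s, rfl⟩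
  · simp only at hr'
    omega
  rcases Fin.eq_zero_or_eq_succ s with rfl | ⟨j, rfl⟩
  · simp only [Fin.succ_zero_eq_one] at hr'
    omega
  have key := lt_iff_lt_of_removeAt_eq h 0 j.succ
  simp only [Fin.zero_succAbove, Fin.one_succAbove_zero, Fin.one_succAbove_succ,
    Fin.succ_zero_eq_one, Fin.lt_def, hr'] at key
  omega

theorem consecutive_of_removeAt_zero_eq_removeAt_last
    (h : τ.removeAt 0 = τ.removeAt (Fin.last _)) :
    (τ 0 : ℕ) + 1 = τ 1 ∨ (τ 1 : ℕ) + 1 = τ 0 := by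
  rcases Fin.strictMono_or_strictAnti_of_succ_lt_succ_iff τ.injective
      (fun i j => by simpa using lt_iff_lt_of_removeAt_eq h i j) with hτ | hτ
  · left
    simp [hτ.apply_eq]
  · right
    simp [apply_eq_rev_of_strictAnti hτ, Fin.val_rev]

theorem strictMono_or_strictAnti_removeAt_zero_of_removeAt_one_eq_removeAt_last
    (h : τ.removeAt 1 = τ.removeAt (Fin.last _)) :
    StrictMono (τ.removeAt 0) ∨ StrictAnti (τ.removeAt 0) := by
  refine Fin.strictMono_or_strictAnti_of_succ_lt_succ_iff (τ.removeAt 0).injective fun i j => ?_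
  have := lt_iff_lt_of_removeAt_eq h i.succ j.succ
  simp only [Fin.one_succAbove_succ, Fin.succAbove_last] at this
  simpa only [removeAt_lt_removeAt_iff, Fin.zero_succAbove, Fin.succ_castSucc] using this

theorem apply_zero_eq_zero_or_last_of_removeAt_one_eq_removeAt_last
    (h : τ.removeAt 1 = τ.removeAt (Fin.last _)) : τ 0 = 0 ∨ τ 0 = Fin.last _ := by
  have below_iff := Fin.forall_iff_zero_of_castSucc_iff_succ
    (P := fun j : Fin (k + 1) => τ 0 < τ j.succ) fun i => by
      have := lt_iff_lt_of_removeAt_eq h 0 i.succ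
      simp only [Fin.one_succAbove_zero, Fin.one_succAbove_succ, Fin.succAbove_last,
        Fin.castSucc_zero] at this
      simpa only [Fin.succ_castSucc] using this.symm
  by_cases h0 : τ 0 < τ (0 : Fin (k + 1)).succ
  · have hmin : ∀ x, τ 0 ≤ τ x :=
      Fin.cases le_rfl fun j => ((below_iff j).2 h0).le
    left
    simpa using hmin (τ.symm 0)
  · have hmax : ∀ x, τ x ≤ τ 0 :=
      Fin.cases le_rfl fun j => not_lt.1 (mt (below_iff j).1 h0)
    right
    exact le_antisymm (Fin.le_last _) (by simpa using hmax (τ.symm (Fin.last _)))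

theorem shape_of_removeAt_one_eq_removeAt_last (h : τ.removeAt 1 = τ.removeAt (Fin.last _)) :
    ((τ 0 : ℕ) + 1 = τ 1 ∨ (τ 1 : ℕ) + 1 = τ 0) ∨
    (∀ i : Fin (k + 2), (τ i : ℕ) = if (i : ℕ) = 0 then 0 else k + 2 - i) ∨
    (∀ i : Fin (k + 2), (τ i : ℕ) = if (i : ℕ) = 0 then k + 2 - 1 else i - 1) := by
  have tail (j : Fin (k + 1)) : τ j.succ = (τ 0).succAbove (τ.removeAt 0 j) :=
    (succAbove_removeAt_apply τ 0 j).symm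
  have one_eq : (1 : Fin (k + 2)) = (0 : Fin (k + 1)).succ := Fin.succ_zero_eq_one.symm
  rcases apply_zero_eq_zero_or_last_of_removeAt_one_eq_removeAt_last h with h0 | h0 <;>
    rcases strictMono_or_strictAnti_removeAt_zero_of_removeAt_one_eq_removeAt_last h
      with hmono | hanti
  · left; left
    rw [one_eq, tail, h0, hmono.apply_eq]
    simp
  · right; left
    refine Fin.cases (by simp [h0]) fun j => ?_
    simp [tail, h0, apply_eq_rev_of_strictAnti hanti, Fin.val_rev]
    omega
  · right; right
    refine Fin.cases (by simp [h0]) fun j => ?_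
    simp [tail, h0, hmono.apply_eq]
  · left; right
    rw [one_eq, tail, h0, apply_eq_rev_of_strictAnti hanti]
    simp

end Equiv.Perm

/-- If `τ = a₁a₂⋯aₙ` covers precisely two permutations in the
quasi-consecutive pattern poset, then either `a₁` and `a₂` are consecutive
integers, or `τ = 1 n (n-1) ⋯ 3 2`, or `τ = n 1 2 ⋯ (n-1)`. -/
theorem covers_two_characterization (τ : QPerm) (hn : 2 ≤ τ.1)
    (h : {σ : QPerm | QCov σ τ}.ncard = 2) :
    (∀ i j : Fin τ.1, (i : ℕ) = 0 → (j : ℕ) = 1 →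
        (τ.2 i : ℕ) + 1 = (τ.2 j : ℕ) ∨ (τ.2 j : ℕ) + 1 = (τ.2 i : ℕ)) ∨
    (∀ i : Fin τ.1, (τ.2 i : ℕ) = if (i : ℕ) = 0 then 0 else τ.1 - (i : ℕ)) ∨
    (∀ i : Fin τ.1, (τ.2 i : ℕ) = if (i : ℕ) = 0 then τ.1 - 1 else (i : ℕ) - 1) := by
  obtain ⟨n, τ⟩ := τ
  obtain ⟨k, rfl⟩ : ∃ k, n = k + 2 := ⟨n - 2, by simp only at hn; omega⟩
  have consecutive (hc : (τ 0 : ℕ) + 1 = τ 1 ∨ (τ 1 : ℕ) + 1 = τ 0) :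
      ∀ i j : Fin (k + 2), (i : ℕ) = 0 → (j : ℕ) = 1 →
        (τ i : ℕ) + 1 = τ j ∨ (τ j : ℕ) + 1 = τ i := by
    rintro i j hi hj
    obtain rfl : i = 0 := Fin.ext hi
    obtain rfl : j = 1 := Fin.ext (by simpa using hj)
    exact hc
  rcases Set.eq_or_eq_or_eq_of_ncard_eq_two h (qCov_removeAt τ (p := 0) (by simp))
      (qCov_removeAt τ (p := 1) (by simp)) (qCov_removeAt τ (p := Fin.last _) (by simp))
    with h01 | h0l | h1l
  · exact Or.inl (consecutive
      (τ.consecutive_of_removeAt_zero_eq_removeAt_one (Sigma.mk.inj_iff.1 h01).2.eq))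
  · exact Or.inl (consecutive
      (τ.consecutive_of_removeAt_zero_eq_removeAt_last (Sigma.mk.inj_iff.1 h0l).2.eq))
  · rcases τ.shape_of_removeAt_one_eq_removeAt_last (Sigma.mk.inj_iff.1 h1l).2.eq with hc | hshape
    · exact Or.inl (consecutive hc)
    · exact Or.inr hshape
end
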